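/- Extremality theorem (lower bound): any hierarchical clustering method H satisfying the Axioms of Value and Transformation produces ultrametrics bounded below by the nonreciprocal ultrametric: u^{NR}_X(x,x') ≤ u_X(x,x') for all networks (X, A_X) and all x, x' ∈ X. -/

import Mathlib

/-- Maximum dissimilarity over consecutive links of a chain (list of nodes). -/
def listCost {X : Type*} (A : X → X → ℝ) (l : List X) : ℝ :=
  (l.zip l.tail).foldr (fun p r => max (A p.1 p.2) r) 0

/-- Minimum over chains from `x` to `x'` of the maximum link cost. -/
noncomputable def minChainCost {X : Type*} (A : X → X → ℝ) (x x' : X) : ℝ :=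
  sInf {c : ℝ | ∃ l : List X, l.head? = some x ∧ l.getLast? = some x' ∧ listCost A l = c}

/-- Symmetrized dissimilarity Ā. -/
def symDis {X : Type*} (A : X → X → ℝ) (x x' : X) : ℝ := max (A x x') (A x' x)

/-- Reciprocal ultrametric. -/
noncomputable def uR {X : Type*} (A : X → X → ℝ) (x x' : X) : ℝ := minChainCost (symDis A) x x'

/-- Nonreciprocal ultrametric. -/
noncomputable def uNR {X : Type*} (A : X → X → ℝ) (x x' : X) : ℝ :=
  max (minChainCost A x x') (minChainCost A x' x)

/-- A (finite, asymmetric) network dissimilarity: nonnegative, vanishing exactly on the diagonal. -/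
def IsNetwork {X : Type*} (A : X → X → ℝ) : Prop :=
  (∀ x x', 0 ≤ A x x') ∧ (∀ x x', A x x' = 0 ↔ x = x')

/-- Ultrametric: nonnegative, symmetric, identity of indiscernibles, strong triangle inequality. -/
def IsUltra {X : Type*} (u : X → X → ℝ) : Prop :=
  (∀ x x', 0 ≤ u x x') ∧ (∀ x x', u x x' = u x' x) ∧
  (∀ x x', u x x' = 0 ↔ x = x') ∧
  (∀ x x' x'', u x x' ≤ max (u x x'') (u x'' x'))


/-!
Suppose the directed chain cost from `a` to `b` exceeded `δ = min (H a b) (H b a)`. The nodes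
reachable from `a` by chains of cost at most `δ` form a set `S` containing `a` but not `b`, and
every link leaving `S` costs more than `δ`. Collapsing `S` and its complement to the two points of
`Bool` is dissimilarity reducing onto a two-node network whose link out of `S` is the cheapest link
crossing the cut, so by the Axioms of Transformation and Value both `H a b` and `H b a` are at
least that cost, which exceeds `δ`.
-/

abbrev ClusteringMethod : Type 1 := ∀ (X : Type) [Fintype X], (X → X → ℝ) → (X → X → ℝ)

def AxiomOfValue (H : ClusteringMethod) : Prop :=
  ∀ (X : Type) [Fintype X] (A : X → X → ℝ), IsNetwork A →
    ∀ p q : X, p ≠ q → (∀ x : X, x = p ∨ x = q) → H X A p q = max (A p q) (A q p)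

def AxiomOfTransformation (H : ClusteringMethod) : Prop :=
  ∀ (X Y : Type) [Fintype X] [Fintype Y] (A_X : X → X → ℝ) (A_Y : Y → Y → ℝ),
    IsNetwork A_X → IsNetwork A_Y →
    ∀ φ : X → Y, (∀ x x' : X, A_Y (φ x) (φ x') ≤ A_X x x') →
      ∀ x x' : X, H Y A_Y (φ x) (φ x') ≤ H X A_X x x'

theorem Finite.exists_gt_forall_le {ι α : Type*} [Finite ι] [LinearOrder α] [NoMaxOrder α]
    (p : ι → Prop) (f : ι → α) {c : α} (h : ∀ i, p i → c < f i) :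
    ∃ d, c < d ∧ ∀ i, p i → d ≤ f i := by
  rcases Set.eq_empty_or_nonempty {i | p i} with hempty | hne
  · obtain ⟨d, hd⟩ := exists_gt c
    exact ⟨d, hd, fun i hi => absurd hi (Set.eq_empty_iff_forall_notMem.mp hempty i)⟩
  · obtain ⟨i₀, hi₀, hmin⟩ := Set.exists_min_image _ f (Set.toFinite _) hne
    exact ⟨f i₀, h i₀ hi₀, hmin⟩

section Chains

variable {X : Type*} {A : X → X → ℝ}

theorem listCost_cons_cons (a b : X) (l : List X) :
    listCost A (a :: b :: l) = max (A a b) (listCost A (b :: l)) := rfl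

theorem listCost_nonneg (hA : ∀ x x', 0 ≤ A x x') : ∀ l : List X, 0 ≤ listCost A l
  | [] | [_] => le_rfl
  | a :: b :: l => by
    rw [listCost_cons_cons]
    exact le_max_of_le_right (listCost_nonneg hA (b :: l))

theorem listCost_append_singleton :
    ∀ (l : List X) {z : X} (z' : X), l.getLast? = some z →
      listCost A (l ++ [z']) = max (listCost A l) (A z z')
  | [], _, _, h => by simp at h
  | [a], _, z', h => by
    obtain rfl : a = _ := by simpa using h
    exact max_comm _ _
  | a :: b :: l, z, z', h => by
    rw [List.getLast?_cons_cons] at h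
    have ih := listCost_append_singleton (b :: l) z' h
    rw [List.cons_append] at ih
    rw [List.cons_append, List.cons_append, listCost_cons_cons, ih, listCost_cons_cons, max_assoc]

variable (hA : ∀ x x', 0 ≤ A x x')
include hA

theorem minChainCost_le_listCost {x x' : X} {l : List X} (hx : l.head? = some x)
    (hx' : l.getLast? = some x') : minChainCost A x x' ≤ listCost A l :=
  csInf_le ⟨0, by rintro c ⟨l, -, -, rfl⟩; exact listCost_nonneg hA l⟩ ⟨l, hx, hx', rfl⟩

theorem minChainCost_self_nonpos (x : X) : minChainCost A x x ≤ 0 :=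
  minChainCost_le_listCost hA (l := [x]) rfl rfl

theorem minChainCost_le_max (x z z' : X) :
    minChainCost A x z' ≤ max (minChainCost A x z) (A z z') := by
  refine le_of_forall_gt_imp_ge_of_dense fun c hc => ?_
  have hlt : minChainCost A x z < c := (le_max_left _ _).trans_lt hc
  obtain ⟨_, ⟨l, hx, hz, rfl⟩, hl⟩ := exists_lt_of_csInf_lt
    (by exact ⟨_, [x, z], rfl, rfl, rfl⟩) hlt
  have hx' : (l ++ [z']).head? = some x := by
    cases l with
    | nil => simp at hx
    | cons a l => simpa using hx
  calc minChainCost A x z' ≤ listCost A (l ++ [z']) :=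
        minChainCost_le_listCost hA hx' (by simp)
    _ = max (listCost A l) (A z z') := listCost_append_singleton l z' hz
    _ ≤ c := max_le hl.le (le_of_max_le_right hc.le)

end Chains

def twoPoint (α β : ℝ) : Bool → Bool → ℝ
  | false, true => α
  | true, false => β
  | _, _ => 0

theorem isNetwork_twoPoint {α β : ℝ} (hα : 0 < α) (hβ : 0 < β) :
    IsNetwork (twoPoint α β) := by
  refine ⟨fun u v => ?_, fun u v => ?_⟩ <;> cases u <;> cases v <;>
    simp [twoPoint, hα.le, hβ.le, hα.ne', hβ.ne']

section Method

variable {H : ClusteringMethod} (hV : AxiomOfValue H) (hT : AxiomOfTransformation H)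
  {X : Type} [Fintype X] {A : X → X → ℝ} (hA : IsNetwork A)
include hV hT hA

theorem le_method_of_cut {S : Set X} {a b : X} (ha : a ∈ S) (hb : b ∉ S) {d : ℝ} (hd : 0 < d)
    (hcut : ∀ z ∈ S, ∀ z' ∉ S, d ≤ A z z') : d ≤ H X A a b ∧ d ≤ H X A b a := by
  classical
  -- `e` keeps `twoPoint d e` below `A` on the links entering `S`.
  obtain ⟨e, he, hoff⟩ := Finite.exists_gt_forall_le (fun p : X × X => p.1 ≠ p.2)
    (fun p => A p.1 p.2) fun p hp =>
      lt_of_le_of_ne (hA.1 _ _) fun h => hp ((hA.2 _ _).mp h.symm)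
  let φ : X → Bool := fun z => decide (z ∉ S)
  have hφ : ∀ z z', twoPoint d e (φ z) (φ z') ≤ A z z' := by
    intro z z'
    by_cases hz : z ∈ S <;> by_cases hz' : z' ∈ S <;> simp only [φ, twoPoint, hz, hz',
      not_true, not_false_eq_true, decide_true, decide_false]
    · exact hA.1 z z'
    · exact hcut z hz z' hz'
    · exact hoff (z, z') (ne_of_mem_of_not_mem hz' hz).symm
    · exact hA.1 z z'
  have hnet := isNetwork_twoPoint hd he
  have hvalue : ∀ p q : Bool, p ≠ q → d ≤ H Bool (twoPoint d e) p q := by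
    intro p q hpq
    rw [hV Bool _ hnet p q hpq fun x => by cases x <;> cases p <;> cases q <;> simp_all]
    cases p <;> cases q <;> simp_all [twoPoint]
  have hφab : φ a ≠ φ b := by simp [φ, ha, hb]
  exact ⟨(hvalue _ _ hφab).trans (hT X Bool A _ hA hnet φ hφ a b),
    (hvalue _ _ hφab.symm).trans (hT X Bool A _ hA hnet φ hφ b a)⟩

theorem minChainCost_le_min_method (hH : ∀ x x', 0 ≤ H X A x x') (a b : X) :
    minChainCost A a b ≤ min (H X A a b) (H X A b a) := by
  set δ := min (H X A a b) (H X A b a)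
  by_contra! hlt
  let S : Set X := {z | minChainCost A a z ≤ δ}
  have hδ : 0 ≤ δ := le_min (hH a b) (hH b a)
  have hcut : ∀ z ∈ S, ∀ z' ∉ S, δ < A z z' := fun z hz z' hz' =>
    lt_of_not_ge fun h => hz' ((minChainCost_le_max hA.1 a z z').trans (max_le hz h))
  obtain ⟨d, hδd, hd⟩ := Finite.exists_gt_forall_le (fun p : X × X => p.1 ∈ S ∧ p.2 ∉ S)
    (fun p => A p.1 p.2) fun p hp => hcut p.1 hp.1 p.2 hp.2
  have hdH := le_method_of_cut hV hT hA (S := S) ((minChainCost_self_nonpos hA.1 a).trans hδ)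
    (not_le.mpr hlt) (hδ.trans_lt hδd) fun z hz z' hz' => hd (z, z') ⟨hz, hz'⟩
  exact (le_min hdH.1 hdH.2).not_gt hδd

end Method

theorem extremal_lower_bound
    (H : ∀ (X : Type) [Fintype X], (X → X → ℝ) → (X → X → ℝ))
    (hUltra : ∀ (X : Type) [Fintype X] (A : X → X → ℝ), IsNetwork A → IsUltra (H X A))
    (hValue : ∀ (X : Type) [Fintype X] (A : X → X → ℝ), IsNetwork A →
      ∀ p q : X, p ≠ q → (∀ x : X, x = p ∨ x = q) →
        H X A p q = max (A p q) (A q p))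
    (hTransf : ∀ (X Y : Type) [Fintype X] [Fintype Y]
        (A_X : X → X → ℝ) (A_Y : Y → Y → ℝ), IsNetwork A_X → IsNetwork A_Y →
      ∀ φ : X → Y, (∀ x x' : X, A_Y (φ x) (φ x') ≤ A_X x x') →
        ∀ x x' : X, H Y A_Y (φ x) (φ x') ≤ H X A_X x x') :
    ∀ (X : Type) [Fintype X] (A : X → X → ℝ), IsNetwork A →
      ∀ x x' : X, uNR A x x' ≤ H X A x x' := by
  intro X _ A hA x x'
  have key := minChainCost_le_min_method hValue hTransf hA (hUltra X A hA).1
  exact max_le ((key x x').trans (min_le_left _ _)) ((key x' x).trans (min_le_right _ _))
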